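/- Let e be a transitive relation on a set E. Every regular closed subset a of e satisfies both a = cl(⋃{c : c clopen, c ⊆ a}) and a = cl(int(⋂{c : c clopen, a ⊆ c})); that is, every element of Reg(e) is a join of clopen sets and a meet of clopen sets (so Reg(e) is the Dedekind–MacNeille completion of Clop(e)). Consequently, every completely join-irreducible element of Reg(e) is clopen. -/

import Mathlib

/-- A binary relation (as a set of pairs) is transitive. -/
def TransRel {E : Type*} (a : Set (E × E)) : Prop :=
  ∀ x y z : E, (x, y) ∈ a → (y, z) ∈ a → (x, z) ∈ a

/-- The transitive closure of a set of pairs. -/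
def tcl {E : Type*} (a : Set (E × E)) : Set (E × E) :=
  {p | Relation.TransGen (fun u v => (u, v) ∈ a) p.1 p.2}

/-- The interior of `a` relative to `e`. -/
def tint {E : Type*} (e a : Set (E × E)) : Set (E × E) :=
  e \ tcl (e \ a)

/-- `a` is a closed subset of `e`. -/
def IsClosedIn {E : Type*} (e a : Set (E × E)) : Prop :=
  a ⊆ e ∧ TransRel a

/-- `a` is an open subset of `e`. -/
def IsOpenIn {E : Type*} (e a : Set (E × E)) : Prop :=
  a ⊆ e ∧ TransRel (e \ a)

/-- `a` is a clopen subset of `e`. -/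
def IsClopenIn {E : Type*} (e a : Set (E × E)) : Prop :=
  a ⊆ e ∧ TransRel a ∧ TransRel (e \ a)

/-- `a` is a regular closed subset of `e`. -/
def RegClosed {E : Type*} (e a : Set (E × E)) : Prop :=
  a ⊆ e ∧ a = tcl (tint e a)

/-- The reflexive preordering `x ⊴ y` associated with `e`. -/
def rle {E : Type*} (e : Set (E × E)) (x y : E) : Prop :=
  (x, y) ∈ e ∨ x = y

/-- `x ≡ y`: `x ⊴ y` and `y ⊴ x`. -/
def eqv {E : Type*} (e : Set (E × E)) (x y : E) : Prop :=
  rle e x y ∧ rle e y x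

/-- `e` is square-free. -/
def SqFree {E : Type*} (e : Set (E × E)) : Prop :=
  ∀ a b x y : E, (a, b) ∈ e → rle e a x → rle e x b → rle e a y → rle e y b →
    rle e x y ∨ rle e y x

/-- The interval `[a,b] = {x | a ⊴ x ⊴ b}`. -/
def cce {E : Type*} (e : Set (E × E)) (a b : E) : Set E :=
  {x | rle e a x ∧ rle e x b}

/-- `(a,b,U) ∈ F(e)`. -/
def Ftriple {E : Type*} (e : Set (E × E)) (a b : E) (U : Set E) : Prop :=
  (a, b) ∈ e ∧ U ⊆ cce e a b ∧ (a ≠ b → a ∉ U ∧ b ∈ U)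

/-- The clopen set `⟨a,b,U⟩ = e ∩ (({a} ∪ Uᶜ) × ({b} ∪ U))`. -/
def pji {E : Type*} (e : Set (E × E)) (a b : E) (U : Set E) : Set (E × E) :=
  e ∩ ((({a} : Set E) ∪ (cce e a b \ U)) ×ˢ (({b} : Set E) ∪ U))

/-- The set `p₋` associated with `p = ⟨a,b,U⟩`: if `a ≠ b` it is
`p \ ([a] × [b])`, and if `a = b` it is `p \ {(a,a)}`. -/
def pminus {E : Type*} (e : Set (E × E)) (a b : E) (U : Set E) : Set (E × E) :=
  {z ∈ pji e a b U | ¬ ((a ≠ b ∧ eqv e z.1 a ∧ eqv e z.2 b) ∨ (a = b ∧ z = (a, a)))}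

/-!
A pair `(x, y)` in the interior of `a` lies in a clopen subset of `a`: let `U` be the points `z`
of the interval `[x, y]` that cannot be reached from `x` by a chain of steps in `e \ a`; then
`⟨x, y, U⟩` is clopen, contains `(x, y)`, and every pair in it lies in `a`, since otherwise `y`
would be reachable from `x` through `e \ a`. Hence the interior of a regular closed `a`, and so
`a` itself, is generated by the clopen sets below `a`. Applied to the open set `e \ a` and
complemented, the same construction separates every pair of `e \ a` from `a` by a clopen superset
of `a`, which gives the meet description. If `p` is completely join-irreducible but not clopen,
every clopen subset of `p` is proper, hence lies below `p'`, and then so does their join `p`.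
-/

section

variable {E : Type*}

lemma subset_tcl (a : Set (E × E)) : a ⊆ tcl a :=
  fun _ h => Relation.TransGen.single h

lemma transRel_tcl (a : Set (E × E)) : TransRel (tcl a) :=
  fun _ _ _ => Relation.TransGen.trans

lemma tcl_mono {a b : Set (E × E)} (h : a ⊆ b) : tcl a ⊆ tcl b :=
  fun _ hp => Relation.TransGen.mono (fun _ _ huv => h huv) _ _ hp

lemma tcl_subset {a b : Set (E × E)} (hb : TransRel b) (h : a ⊆ b) : tcl a ⊆ b := by
  rintro ⟨x, y⟩ hp
  change Relation.TransGen _ x y at hp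
  induction hp with
  | single hxy => exact h hxy
  | tail _ hyz ih => exact hb _ _ _ ih (h hyz)

lemma TransRel.tcl_eq {a : Set (E × E)} (ha : TransRel a) : tcl a = a :=
  (tcl_subset ha subset_rfl).antisymm (subset_tcl a)

lemma tint_mono (e : Set (E × E)) {a b : Set (E × E)} (h : a ⊆ b) : tint e a ⊆ tint e b :=
  Set.sdiff_subset_sdiff_right (tcl_mono (Set.sdiff_subset_sdiff_right h))

lemma RegClosed.transRel {e a : Set (E × E)} (ha : RegClosed e a) : TransRel a := by
  rw [ha.2]
  exact transRel_tcl _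

lemma rle_trans {e : Set (E × E)} (he : TransRel e) {x y z : E}
    (hxy : rle e x y) (hyz : rle e y z) : rle e x z := by
  rcases hxy with hxy | rfl
  · rcases hyz with hyz | rfl
    · exact Or.inl (he _ _ _ hxy hyz)
    · exact Or.inl hxy
  · exact hyz

lemma isClopenIn_pji {e : Set (E × E)} (he : TransRel e) {x y : E} {U : Set E}
    (hU : U ⊆ cce e x y) : IsClopenIn e (pji e x y U) := by
  refine ⟨Set.inter_subset_left, ?_, ?_⟩
  · rintro u v w ⟨huv, hu, -⟩ ⟨hvw, -, hw⟩
    exact ⟨he u v w huv hvw, hu, hw⟩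
  · rintro u v w ⟨huv, huv_out⟩ ⟨hvw, hvw_out⟩
    refine ⟨he u v w huv hvw, fun ⟨_, hu, hw⟩ => ?_⟩
    have hxu : rle e x u := by
      rcases hu with rfl | hu
      exacts [Or.inr rfl, hu.1.1]
    have hwy : rle e w y := by
      rcases hw with rfl | hw
      exacts [Or.inr rfl, (hU hw).2]
    have hv : v ∈ cce e x y :=
      ⟨rle_trans he hxu (Or.inl huv), rle_trans he (Or.inl hvw) hwy⟩
    by_cases hvU : v ∈ U
    · exact huv_out ⟨huv, hu, Or.inr hvU⟩
    · exact hvw_out ⟨hvw, Or.inr ⟨hv, hvU⟩, hw⟩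

lemma IsClopenIn.diff {e c : Set (E × E)} (hc : IsClopenIn e c) : IsClopenIn e (e \ c) :=
  ⟨Set.sdiff_subset, hc.2.2, by rw [Set.sdiff_sdiff_cancel_left hc.1]; exact hc.2.1⟩

lemma IsClopenIn.regClosed {e c : Set (E × E)} (hc : IsClopenIn e c) : RegClosed e c :=
  ⟨hc.1, by rw [tint, hc.2.2.tcl_eq, Set.sdiff_sdiff_cancel_left hc.1, hc.2.1.tcl_eq]⟩

lemma exists_isClopenIn_subset_of_mem_tint {e a : Set (E × E)} (he : TransRel e) {x y : E}
    (hxy : (x, y) ∈ tint e a) : ∃ c, IsClopenIn e c ∧ c ⊆ a ∧ (x, y) ∈ c := by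
  set U : Set E := {z | z ∈ cce e x y ∧ (x, z) ∉ tcl (e \ a)}
  refine ⟨pji e x y U, isClopenIn_pji he fun _ hz => hz.1, ?_, hxy.1, Or.inl rfl, Or.inl rfl⟩
  rintro ⟨u, v⟩ ⟨huv, hu, hv⟩
  by_contra huv_a
  have hxu : u = x ∨ (x, u) ∈ tcl (e \ a) := by
    rcases hu with rfl | ⟨hu, huU⟩
    exacts [Or.inl rfl, Or.inr (not_not.mp fun h => huU ⟨hu, h⟩)]
  have hxv : (x, v) ∈ tcl (e \ a) := by
    rcases hxu with rfl | hxu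
    exacts [subset_tcl _ ⟨huv, huv_a⟩, transRel_tcl _ _ _ _ hxu (subset_tcl _ ⟨huv, huv_a⟩)]
  rcases hv with rfl | hv
  exacts [hxy.2 hxv, hv.2 hxv]

lemma RegClosed.exists_isClopenIn_superset_not_mem {e a : Set (E × E)} (he : TransRel e)
    (ha : RegClosed e a) {x y : E} (hxy : (x, y) ∈ e \ a) :
    ∃ c, IsClopenIn e c ∧ a ⊆ c ∧ (x, y) ∉ c := by
  have htint : tint e (e \ a) = e \ a := by
    rw [tint, Set.sdiff_sdiff_cancel_left ha.1, ha.transRel.tcl_eq]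
  obtain ⟨c, hc, hca, hxyc⟩ :=
    exists_isClopenIn_subset_of_mem_tint (a := e \ a) he (htint ▸ hxy)
  exact ⟨e \ c, hc.diff, fun z hz => ⟨ha.1 hz, fun hzc => (hca hzc).2 hz⟩, fun h => h.2 hxyc⟩

lemma RegClosed.eq_tcl_sUnion_isClopenIn {e a : Set (E × E)} (he : TransRel e)
    (ha : RegClosed e a) : a = tcl (⋃₀ {c | IsClopenIn e c ∧ c ⊆ a}) := by
  refine subset_antisymm ?_ (tcl_subset ha.transRel (Set.sUnion_subset fun c hc => hc.2))
  conv_lhs => rw [ha.2]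
  refine tcl_mono fun z hz => ?_
  obtain ⟨c, hc, hca, hzc⟩ := exists_isClopenIn_subset_of_mem_tint he hz
  exact ⟨c, ⟨hc, hca⟩, hzc⟩

lemma RegClosed.eq_tcl_tint_sInter_isClopenIn {e a : Set (E × E)} (he : TransRel e)
    (ha : RegClosed e a) : a = tcl (tint e (⋂₀ {c | IsClopenIn e c ∧ a ⊆ c})) := by
  refine subset_antisymm ?_ (tcl_subset ha.transRel fun z hz => ?_)
  · conv_lhs => rw [ha.2]
    exact tcl_mono (tint_mono e (Set.subset_sInter fun c hc => hc.2))
  · by_contra hza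
    obtain ⟨c, hc, hac, hzc⟩ := ha.exists_isClopenIn_superset_not_mem he ⟨hz.1, hza⟩
    exact hz.2 (subset_tcl _ ⟨hz.1, fun hz' => hzc (hz' c ⟨hc, hac⟩)⟩)

lemma RegClosed.isClopenIn_of_completelyJoinIrreducible {e p p' : Set (E × E)}
    (he : TransRel e) (hp : RegClosed e p) (hp' : RegClosed e p') (hp'p : p' ⊂ p)
    (hmax : ∀ x, RegClosed e x → x ⊂ p → x ⊆ p') : IsClopenIn e p := by
  by_contra hnc
  have hclopen_le : ⋃₀ {c | IsClopenIn e c ∧ c ⊆ p} ⊆ p' := by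
    rintro z ⟨c, ⟨hc, hcp⟩, hzc⟩
    exact hmax c hc.regClosed (hcp.ssubset_of_ne fun h => hnc (h ▸ hc)) hzc
  refine hp'p.2 ?_
  rw [hp.eq_tcl_sUnion_isClopenIn he]
  exact tcl_subset hp'.transRel hclopen_le

end

/-- every regular closed subset of `e` is a join of clopen sets and a meet of
clopen sets (so `Reg(e)` is the Dedekind–MacNeille completion of `Clop(e)`); consequently,
every completely join-irreducible element of `Reg(e)` is clopen. -/
theorem regClosed_joins_meets_of_clopen {E : Type*} (e : Set (E × E)) (he : TransRel e) :
    (∀ a : Set (E × E), RegClosed e a →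
      a = tcl (⋃₀ {c | IsClopenIn e c ∧ c ⊆ a}) ∧
      a = tcl (tint e (⋂₀ {c | IsClopenIn e c ∧ a ⊆ c}))) ∧
    (∀ p : Set (E × E), RegClosed e p →
      (∃ p', RegClosed e p' ∧ p' ⊂ p ∧ ∀ x, RegClosed e x → x ⊂ p → x ⊆ p') →
      IsClopenIn e p) :=
  ⟨fun _ ha => ⟨ha.eq_tcl_sUnion_isClopenIn he, ha.eq_tcl_tint_sInter_isClopenIn he⟩,
    fun _ hp ⟨_, hp', hp'p, hmax⟩ => hp.isClopenIn_of_completelyJoinIrreducible he hp' hp'p hmax⟩
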